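/- arXiv:2302.08176 — 8 statements merged into one kernel-verified Lean document; each statement's English description precedes it below -/
import Mathlib

section
/- The set K⁺ := {A ⊆ T : A ∩ T⁺ ≠ ∅} is a coherent SDS, and it is the smallest one: K⁺ = ⋂{K : K a coherent SDS}, i.e. K⁺ ⊆ K for every coherent SDS K. -/
universe u

variable {T : Type u}

/-- `cl` is a closure operator on subsets of `T`. -/
def IsClosure (cl : Set T → Set T) : Prop :=
  (∀ A : Set T, A ⊆ cl A) ∧
  (∀ A B : Set T, A ⊆ B → cl A ⊆ cl B) ∧
  (∀ A : Set T, cl (cl A) = cl A)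

/-- `cl` is finitary: the closure of a set is the union of the closures of its
finite subsets. -/
def IsFinitary (cl : Set T → Set T) : Prop :=
  ∀ A : Set T, cl A = ⋃ F ∈ {F : Set T | F.Finite ∧ F ⊆ A}, cl F

/-- A coherent set of desirable things (SDT): closed and avoiding the forbidden
things `Tneg`. -/
def CohSDT (cl : Set T → Set T) (Tneg : Set T) (D : Set T) : Prop :=
  cl D = D ∧ D ∩ Tneg = ∅

/-- Selection maps of a collection `W` of sets of things: maps choosing an
element of each member of `W`. -/
def Sel (W : Set (Set T)) : Type u :=
  {σ : Set T → T // ∀ A ∈ W, σ A ∈ A}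

/-- A coherent set of desirable sets of things (SDS): axioms K1–K5. -/
def CohSDS (cl : Set T → Set T) (Tneg : Set T) (K : Set (Set T)) : Prop :=
  (∅ : Set T) ∉ K ∧
  (∀ A₁ ∈ K, ∀ A₂ : Set T, A₁ ⊆ A₂ → A₂ ∈ K) ∧
  (∀ A ∈ K, A \ Tneg ∈ K) ∧
  (∀ t ∈ cl (∅ : Set T), ({t} : Set T) ∈ K) ∧
  (∀ W ⊆ K, W.Nonempty →
    ∀ f : Sel W → T, (∀ σ : Sel W, f σ ∈ cl (σ.1 '' W)) → Set.range f ∈ K)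

/-- A finitely coherent SDS: axioms K1–K4 together with K5 restricted to
nonempty finite subcollections. -/
def FinCohSDS (cl : Set T → Set T) (Tneg : Set T) (K : Set (Set T)) : Prop :=
  (∅ : Set T) ∉ K ∧
  (∀ A₁ ∈ K, ∀ A₂ : Set T, A₁ ⊆ A₂ → A₂ ∈ K) ∧
  (∀ A ∈ K, A \ Tneg ∈ K) ∧
  (∀ t ∈ cl (∅ : Set T), ({t} : Set T) ∈ K) ∧
  (∀ W ⊆ K, W.Finite → W.Nonempty →
    ∀ f : Sel W → T, (∀ σ : Sel W, f σ ∈ cl (σ.1 '' W)) → Set.range f ∈ K)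

/-- A finitely coherent set of desirable finite sets of things (SDFS):
axioms F1–F5. -/
def FinCohSDFS (cl : Set T → Set T) (Tneg : Set T) (K : Set (Set T)) : Prop :=
  (∀ F ∈ K, F.Finite) ∧
  (∅ : Set T) ∉ K ∧
  (∀ F₁ ∈ K, ∀ F₂ : Set T, F₂.Finite → F₁ ⊆ F₂ → F₂ ∈ K) ∧
  (∀ F ∈ K, F \ Tneg ∈ K) ∧
  (∀ t ∈ cl (∅ : Set T), ({t} : Set T) ∈ K) ∧
  (∀ W ⊆ K, W.Finite → W.Nonempty →
    ∀ f : Sel W → T, (∀ σ : Sel W, f σ ∈ cl (σ.1 '' W)) → Set.range f ∈ K)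

/-- The set of things whose singletons belong to `K`. -/
def sdt (K : Set (Set T)) : Set T := {t | ({t} : Set T) ∈ K}

/-- The SDS of all sets of things meeting `D`. -/
def sds (D : Set T) : Set (Set T) := {A | (A ∩ D).Nonempty}

/-- The SDFS of all finite sets of things meeting `D`. -/
def sdfs (D : Set T) : Set (Set T) := {F | F.Finite ∧ (F ∩ D).Nonempty}

/-- The event `𝒟_A` of all coherent SDTs meeting `A`. -/
def evA (cl : Set T → Set T) (Tneg : Set T) (A : Set T) : Set (Set T) :=
  {D | CohSDT cl Tneg D ∧ (A ∩ D).Nonempty}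

/-- The event `E(W)` of all coherent SDTs meeting every member of `W`
(with `E(∅)` equal to the set of all coherent SDTs). -/
def ev (cl : Set T → Set T) (Tneg : Set T) (W : Set (Set T)) : Set (Set T) :=
  {D | CohSDT cl Tneg D ∧ ∀ A ∈ W, (A ∩ D).Nonempty}

/-- An SDS is conjunctive if every desirable set contains a desirable
singleton. -/
def Conjunctive (K : Set (Set T)) : Prop :=
  ∀ A ∈ K, ∃ t ∈ A, ({t} : Set T) ∈ K

/-- Completeness of an SDS. -/
def CompleteSDS (K : Set (Set T)) : Prop :=
  ∀ A₁ A₂ : Set T, A₁ ∪ A₂ ∈ K → A₁ ∈ K ∨ A₂ ∈ K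

/-- The finitary part `K^f` of an SDS. -/
def finPart (K : Set (Set T)) : Set (Set T) :=
  {A | ∃ B ∈ K, B.Finite ∧ B ⊆ A}

/-- An SDS is finitary if every desirable set has a finite desirable subset. -/
def FinitarySDS (K : Set (Set T)) : Prop :=
  ∀ A ∈ K, ∃ B, B.Finite ∧ B ⊆ A ∧ B ∈ K

/-- The lattice of events `E`. -/
def Ecal (cl : Set T → Set T) (Tneg : Set T) : Set (Set (Set T)) :=
  {E | ∃ W : Set (Set T), E = ev cl Tneg W}

/-- The lattice of finitary events `E_fin`. -/
def Efin (cl : Set T → Set T) (Tneg : Set T) : Set (Set (Set T)) :=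
  {E | ∃ W : Set (Set T), W.Finite ∧ E = ev cl Tneg W}

/-- A filter on a lattice of events `L` ordered by inclusion. -/
def IsFilterOn (L F : Set (Set (Set T))) : Prop :=
  F ⊆ L ∧ F.Nonempty ∧
  (∀ E₁ ∈ F, ∀ E₂ ∈ L, E₁ ⊆ E₂ → E₂ ∈ F) ∧
  (∀ E₁ ∈ F, ∀ E₂ ∈ F, E₁ ∩ E₂ ∈ F)

/-- A proper filter on `L`. -/
def IsProperFilterOn (L F : Set (Set (Set T))) : Prop :=
  IsFilterOn L F ∧ F ≠ L

/-- A prime filter on `L`. -/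
def IsPrimeFilterOn (L F : Set (Set (Set T))) : Prop :=
  IsProperFilterOn L F ∧
  ∀ E₁ ∈ L, ∀ E₂ ∈ L, E₁ ∪ E₂ ∈ F → E₁ ∈ F ∨ E₂ ∈ F

/-- A proper principal filter on `L`: the upset of some nonempty `E₀ ∈ L`. -/
def IsProperPrincipalFilterOn (L F : Set (Set (Set T))) : Prop :=
  ∃ E₀ ∈ L, E₀ ≠ (∅ : Set (Set T)) ∧ F = {E' | E' ∈ L ∧ E₀ ⊆ E'}

/-- The map `f̂` sending an SDS to the collection of events of its finite
subcollections. -/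
def fhat (cl : Set T → Set T) (Tneg : Set T) (K : Set (Set T)) :
    Set (Set (Set T)) :=
  {E | ∃ W : Set (Set T), W ⊆ K ∧ W.Finite ∧ E = ev cl Tneg W}

/-- The map `f` sending an SDS to the collection of events of all of its
subcollections. -/
def fprin (cl : Set T → Set T) (Tneg : Set T) (K : Set (Set T)) :
    Set (Set (Set T)) :=
  {E | ∃ W : Set (Set T), W ⊆ K ∧ E = ev cl Tneg W}

/-- The map `d` sending a collection of events to the SDS it determines. -/
def dmap (cl : Set T → Set T) (Tneg : Set T) (F : Set (Set (Set T))) :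
    Set (Set T) :=
  {A : Set T | evA cl Tneg A ∈ F}

/-- `K` is finitely consistent: it is included in some finitely coherent SDS. -/
def FinConsistent (cl : Set T → Set T) (Tneg : Set T) (K : Set (Set T)) : Prop :=
  ∃ K' : Set (Set T), FinCohSDS cl Tneg K' ∧ K ⊆ K'

/-- `K` is consistent: it is included in some coherent SDS. -/
def Consistent (cl : Set T → Set T) (Tneg : Set T) (K : Set (Set T)) : Prop :=
  ∃ K' : Set (Set T), CohSDS cl Tneg K' ∧ K ⊆ K'

/-- The finitary closure operator on SDSes (with value `𝒫(T)` when `K` is not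
finitely consistent, via the empty-intersection convention). -/
def clFin (cl : Set T → Set T) (Tneg : Set T) (K : Set (Set T)) : Set (Set T) :=
  ⋂₀ {K' : Set (Set T) | FinCohSDS cl Tneg K' ∧ K ⊆ K'}

/-- The closure operator on SDSes (with value `𝒫(T)` when `K` is not
consistent, via the empty-intersection convention). -/
def clSDS (cl : Set T → Set T) (Tneg : Set T) (K : Set (Set T)) : Set (Set T) :=
  ⋂₀ {K' : Set (Set T) | CohSDS cl Tneg K' ∧ K ⊆ K'}

/-!
Every coherent SDS is upward closed (K2) and contains the singletons of `T⁺ = cl ∅` (K4), so it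
contains every set meeting `T⁺`. Conversely `T⁺` is a coherent SDT, and for any coherent SDT `D`
the sets meeting `D` form a coherent SDS: for K5, select from each member of `W` a point of `D`;
the closure of the selected points lies in `cl D = D`.
-/

namespace IsClosure

variable {cl : Set T → Set T}

theorem closure_subset_of_subset_closure (hcl : IsClosure cl) {A B : Set T} (h : A ⊆ cl B) :
    cl A ⊆ cl B :=
  hcl.2.2 B ▸ hcl.2.1 A (cl B) h

theorem cohSDT_closure_empty (hcl : IsClosure cl) {Tneg : Set T}
    (hsan : cl (∅ : Set T) ∩ Tneg = ∅) : CohSDT cl Tneg (cl ∅) :=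
  ⟨hcl.2.2 ∅, hsan⟩

end IsClosure

theorem Sel.exists_image_subset {W : Set (Set T)} {D : Set T} (hW : W.Nonempty)
    (hmeet : ∀ A ∈ W, (A ∩ D).Nonempty) : ∃ σ : Sel W, σ.1 '' W ⊆ D := by
  classical
  obtain ⟨A₀, hA₀⟩ := hW
  let t₀ : T := (hmeet A₀ hA₀).some
  let σ : Set T → T := fun A => if h : (A ∩ D).Nonempty then h.some else t₀
  have hσ : ∀ A ∈ W, σ A ∈ A ∩ D := fun A hA => by
    simpa only [σ, dif_pos (hmeet A hA)] using (hmeet A hA).some_mem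
  exact ⟨⟨σ, fun A hA => (hσ A hA).1⟩, Set.image_subset_iff.2 fun A hA => (hσ A hA).2⟩

theorem cohSDS_sds {cl : Set T → Set T} {Tneg D : Set T} (hcl : IsClosure cl)
    (hD : CohSDT cl Tneg D) : CohSDS cl Tneg (sds D) := by
  have hclosed : ∀ {A : Set T}, A ⊆ D → cl A ⊆ D := fun h =>
    hD.1 ▸ hcl.closure_subset_of_subset_closure (h.trans (hcl.1 D))
  refine ⟨by simp [sds], ?_, ?_, ?_, ?_⟩
  · rintro A₁ ⟨t, htA, htD⟩ A₂ hsub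
    exact ⟨t, hsub htA, htD⟩
  · rintro A ⟨t, htA, htD⟩
    have htTneg : t ∉ Tneg := fun h => (Set.eq_empty_iff_forall_notMem.1 hD.2) t ⟨htD, h⟩
    exact ⟨t, ⟨htA, htTneg⟩, htD⟩
  · intro t ht
    exact ⟨t, rfl, hclosed (Set.empty_subset D) ht⟩
  · intro W hW hWne f hf
    obtain ⟨σ, hσD⟩ := Sel.exists_image_subset hWne fun A hA => hW hA
    exact ⟨f σ, ⟨σ, rfl⟩, hclosed hσD (hf σ)⟩

theorem CohSDS.sds_closure_empty_subset {cl : Set T → Set T} {Tneg : Set T} {K : Set (Set T)}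
    (hK : CohSDS cl Tneg K) : sds (cl ∅) ⊆ K := by
  rintro A ⟨t, htA, htcl⟩
  exact hK.2.1 {t} (hK.2.2.2.1 t htcl) A (Set.singleton_subset_iff.2 htA)

theorem smallest_cohSDS_general (T : Type u)
    (cl : Set T → Set T) (Tneg : Set T)
    (hcl : IsClosure cl) (hsan : cl (∅ : Set T) ∩ Tneg = ∅) :
    CohSDS cl Tneg {A : Set T | (A ∩ cl (∅ : Set T)).Nonempty} ∧
    {A : Set T | (A ∩ cl (∅ : Set T)).Nonempty} =
      ⋂₀ {K : Set (Set T) | CohSDS cl Tneg K} ∧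
    ∀ K : Set (Set T), CohSDS cl Tneg K →
      {A : Set T | (A ∩ cl (∅ : Set T)).Nonempty} ⊆ K := by
  have hcoh : CohSDS cl Tneg (sds (cl ∅)) := cohSDS_sds hcl (hcl.cohSDT_closure_empty hsan)
  have hleast : ∀ K, CohSDS cl Tneg K → sds (cl ∅) ⊆ K := fun _ hK => hK.sds_closure_empty_subset
  exact ⟨hcoh, (Set.subset_sInter hleast).antisymm (Set.sInter_subset_of_mem hcoh), hleast⟩

/-- The set `K⁺ = {A ⊆ T : A ∩ T⁺ ≠ ∅}` is the smallest coherent SDS. -/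
theorem smallest_cohSDS (T : Type u) [Nonempty T]
    (cl : Set T → Set T) (Tneg : Set T)
    (hcl : IsClosure cl) (hsan : cl (∅ : Set T) ∩ Tneg = ∅) :
    CohSDS cl Tneg {A : Set T | (A ∩ cl (∅ : Set T)).Nonempty} ∧
    {A : Set T | (A ∩ cl (∅ : Set T)).Nonempty} =
      ⋂₀ {K : Set (Set T) | CohSDS cl Tneg K} ∧
    ∀ K : Set (Set T), CohSDS cl Tneg K →
      {A : Set T | (A ∩ cl (∅ : Set T)).Nonempty} ⊆ K :=
  smallest_cohSDS_general T cl Tneg hcl hsan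
end

section
/- Let K ⊆ 𝒫(T). (a) If K is a coherent SDS or a finitely coherent SDS, then sds(sdt(K)) ⊆ K. (b) If K is a coherent SDS, then sdt(K) is a coherent SDT. (c) If K is a finitely coherent SDS and cl is finitary, then sdt(K) is a coherent SDT. -/
/-!
A set `A` meeting `sdt K` contains a desirable singleton, so it is desirable by monotonicity (K2).
No singleton `{t}` with `t ∈ Tneg` is desirable, since K3 would make `∅` desirable.
For closedness, take `t ∈ cl F` with `F ⊆ sdt K` (finite when `cl` is finitary) and apply K5 to
`W = {{d} | d ∈ F}`: every selection map of `W` has image exactly `F`, so the constant choice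
`t_σ = t` is admissible and yields `{t} ∈ K`; when `F = ∅`, K4 gives `{t} ∈ K` directly.
-/

universe u

variable {T : Type u}

namespace Sel

theorem nonempty [Nonempty T] {W : Set (Set T)} (hW : ∀ A ∈ W, A.Nonempty) : Nonempty (Sel W) :=
  ⟨⟨fun A => Classical.epsilon (· ∈ A), fun A hA => Classical.epsilon_spec (hW A hA)⟩⟩

theorem image_singletons {F : Set T} (σ : Sel (singleton '' F)) :
    σ.1 '' (singleton '' F) = F := by
  have hσ : ∀ d ∈ F, σ.1 {d} = d := fun d hd => σ.2 {d} ⟨d, hd, rfl⟩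
  ext x
  constructor
  · rintro ⟨_, ⟨d, hd, rfl⟩, rfl⟩
    rwa [hσ d hd]
  · intro hx
    exact ⟨{x}, ⟨x, hx, rfl⟩, hσ x hx⟩

end Sel

section sdt

variable {cl : Set T → Set T} {Tneg : Set T} {K : Set (Set T)}

theorem sds_sdt_subset (hmono : ∀ A₁ ∈ K, ∀ A₂ : Set T, A₁ ⊆ A₂ → A₂ ∈ K) :
    sds (sdt K) ⊆ K := by
  rintro A ⟨t, htA, ht⟩
  exact hmono {t} ht A (Set.singleton_subset_iff.2 htA)

theorem sdt_inter_eq_empty (hempty : (∅ : Set T) ∉ K) (hdiff : ∀ A ∈ K, A \ Tneg ∈ K) :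
    sdt K ∩ Tneg = ∅ := by
  refine Set.eq_empty_of_forall_notMem fun t ⟨ht, htneg⟩ => hempty ?_
  simpa [Set.sdiff_eq_empty.2 (Set.singleton_subset_iff.2 htneg)] using hdiff {t} ht

theorem singleton_image_subset_of_subset_sdt {F : Set T} (hF : F ⊆ sdt K) :
    singleton '' F ⊆ K :=
  Set.image_subset_iff.2 hF

theorem singleton_mem_of_mem_cl {F : Set T} {t : T} (ht : t ∈ cl F)
    (hK5 : ∀ f : Sel (singleton '' F) → T,
      (∀ σ : Sel (singleton '' F), f σ ∈ cl (σ.1 '' (singleton '' F))) → Set.range f ∈ K) :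
    ({t} : Set T) ∈ K := by
  have : Nonempty T := ⟨t⟩
  have : Nonempty (Sel (singleton '' F)) := Sel.nonempty (by
    rintro _ ⟨d, -, rfl⟩
    exact Set.singleton_nonempty d)
  have h := hK5 (fun _ => t) fun σ => by rwa [Sel.image_singletons]
  rwa [Set.range_const] at h

end sdt

namespace CohSDS

variable {cl : Set T → Set T} {Tneg : Set T} {K : Set (Set T)}

theorem sds_sdt_subset (hK : CohSDS cl Tneg K) : sds (sdt K) ⊆ K :=
  _root_.sds_sdt_subset hK.2.1

theorem cl_sdt_subset (hK : CohSDS cl Tneg K) : cl (sdt K) ⊆ sdt K := by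
  obtain ⟨-, -, -, hK4, hK5⟩ := hK
  intro t ht
  rcases (sdt K).eq_empty_or_nonempty with hD | hD
  · rw [hD] at ht
    exact hK4 t ht
  · exact singleton_mem_of_mem_cl ht
      (hK5 _ (singleton_image_subset_of_subset_sdt subset_rfl) (hD.image _))

theorem cohSDT_sdt (hK : CohSDS cl Tneg K) (hext : ∀ A : Set T, A ⊆ cl A) :
    CohSDT cl Tneg (sdt K) :=
  ⟨hK.cl_sdt_subset.antisymm (hext _), sdt_inter_eq_empty hK.1 hK.2.2.1⟩

end CohSDS

namespace FinCohSDS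

variable {cl : Set T → Set T} {Tneg : Set T} {K : Set (Set T)}

theorem sds_sdt_subset (hK : FinCohSDS cl Tneg K) : sds (sdt K) ⊆ K :=
  _root_.sds_sdt_subset hK.2.1

theorem cl_sdt_subset (hK : FinCohSDS cl Tneg K) (hfin : IsFinitary cl) :
    cl (sdt K) ⊆ sdt K := by
  obtain ⟨-, -, -, hK4, hK5⟩ := hK
  intro t ht
  rw [hfin (sdt K)] at ht
  simp only [Set.mem_iUnion] at ht
  obtain ⟨F, ⟨hFfin, hFsub⟩, htF⟩ := ht
  rcases F.eq_empty_or_nonempty with rfl | hF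
  · exact hK4 t htF
  · exact singleton_mem_of_mem_cl htF
      (hK5 _ (singleton_image_subset_of_subset_sdt hFsub) (hFfin.image _) (hF.image _))

theorem cohSDT_sdt (hK : FinCohSDS cl Tneg K) (hfin : IsFinitary cl)
    (hext : ∀ A : Set T, A ⊆ cl A) : CohSDT cl Tneg (sdt K) :=
  ⟨(hK.cl_sdt_subset hfin).antisymm (hext _), sdt_inter_eq_empty hK.1 hK.2.2.1⟩

end FinCohSDS

theorem cohSDS_to_cohSDT_general (T : Type u)
    (cl : Set T → Set T) (Tneg : Set T)
    (hcl : IsClosure cl)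
    (K : Set (Set T)) :
    ((CohSDS cl Tneg K ∨ FinCohSDS cl Tneg K) → sds (sdt K) ⊆ K) ∧
    (CohSDS cl Tneg K → CohSDT cl Tneg (sdt K)) ∧
    (FinCohSDS cl Tneg K → IsFinitary cl → CohSDT cl Tneg (sdt K)) :=
  ⟨fun hK => hK.elim CohSDS.sds_sdt_subset FinCohSDS.sds_sdt_subset,
    fun hK => hK.cohSDT_sdt hcl.1,
    fun hK hfin => hK.cohSDT_sdt hfin hcl.1⟩

/-- Proposition on the map `sdt` from (finitely) coherent SDSes to
coherent SDTs. -/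
theorem cohSDS_to_cohSDT (T : Type u) [Nonempty T]
    (cl : Set T → Set T) (Tneg : Set T)
    (hcl : IsClosure cl) (hsan : cl (∅ : Set T) ∩ Tneg = ∅)
    (K : Set (Set T)) :
    ((CohSDS cl Tneg K ∨ FinCohSDS cl Tneg K) → sds (sdt K) ⊆ K) ∧
    (CohSDS cl Tneg K → CohSDT cl Tneg (sdt K)) ∧
    (FinCohSDS cl Tneg K → IsFinitary cl → CohSDT cl Tneg (sdt K)) :=
  cohSDS_to_cohSDT_general T cl Tneg hcl K
end

section
/- For every W ⊆ 𝒫(T), E(W) = ↑B(W); that is, a coherent SDT D belongs to ⋂_{A ∈ W} 𝒟_A if and only if there exist a selection map σ of W and a coherent SDT D₀ of the form D₀ = cl(σ(W)) with D₀ ⊆ D. -/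
universe u

variable {T : Type u}

/- A coherent SDT `D` meets every member of `W` exactly when some selection map sends `W` into `D`;
since `D` is closed, `σ(W) ⊆ D` is the same as `cl(σ(W)) ⊆ D`, and then the closed set `cl(σ(W))`
avoids `Tneg` because `D` does. -/

theorem Sel.exists_image_subset_iff {T : Type u} [Nonempty T] {W : Set (Set T)} {D : Set T} :
    (∃ σ : Sel W, σ.1 '' W ⊆ D) ↔ ∀ A ∈ W, (A ∩ D).Nonempty := by
  refine ⟨fun ⟨σ, hσ⟩ A hA => ⟨σ.1 A, σ.2 A hA, hσ (Set.mem_image_of_mem _ hA)⟩, fun h => ?_⟩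
  classical
  choose pick hpick using h
  let σ : Sel W :=
    ⟨fun A => if hA : A ∈ W then pick A hA else Classical.arbitrary T,
      fun A hA => by simpa only [dif_pos hA] using (hpick A hA).1⟩
  refine ⟨σ, ?_⟩
  rintro _ ⟨A, hA, rfl⟩
  simpa only [σ, dif_pos hA] using (hpick A hA).2

namespace IsClosure

variable {T : Type u} {cl : Set T → Set T} {Tneg S D : Set T}

theorem closure_subset_iff (hcl : IsClosure cl) (hD : cl D = D) : cl S ⊆ D ↔ S ⊆ D :=
  ⟨(hcl.1 S).trans, fun h => (hcl.2.1 S D h).trans hD.le⟩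

theorem cohSDT_closure (hcl : IsClosure cl) (hD : CohSDT cl Tneg D) (hS : S ⊆ D) :
    CohSDT cl Tneg (cl S) :=
  ⟨hcl.2.2 S, Set.eq_empty_of_subset_empty <|
    hD.2 ▸ Set.inter_subset_inter_left Tneg ((hcl.closure_subset_iff hD.1).2 hS)⟩

end IsClosure

theorem ev_eq_upset_basicEvent_general (T : Type u) [Nonempty T]
    (cl : Set T → Set T) (Tneg : Set T)
    (hcl : IsClosure cl)
    (W : Set (Set T)) :
    ev cl Tneg W =
      {D' : Set T | CohSDT cl Tneg D' ∧
        ∃ σ : Sel W, CohSDT cl Tneg (cl (σ.1 '' W)) ∧ cl (σ.1 '' W) ⊆ D'} := by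
  ext D
  refine and_congr_right fun hD => ?_
  rw [← Sel.exists_image_subset_iff]
  refine exists_congr fun σ => ?_
  rw [hcl.closure_subset_iff hD.1]
  exact ⟨fun h => ⟨hcl.cohSDT_closure hD h, h⟩, And.right⟩

/-- `E(W)` is the upset of the set `B(W)` of coherent SDTs of the form
`cl(σ(W))` for selection maps `σ` of `W`. -/
theorem ev_eq_upset_basicEvent (T : Type u) [Nonempty T]
    (cl : Set T → Set T) (Tneg : Set T)
    (hcl : IsClosure cl) (hsan : cl (∅ : Set T) ∩ Tneg = ∅)
    (W : Set (Set T)) :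
    ev cl Tneg W =
      {D' : Set T | CohSDT cl Tneg D' ∧
        ∃ σ : Sel W, CohSDT cl Tneg (cl (σ.1 '' W)) ∧ cl (σ.1 '' W) ⊆ D'} :=
  ev_eq_upset_basicEvent_general T cl Tneg hcl W
end

section
/- (a) If K is a coherent SDS, then E(W) ≠ ∅ for every W ⊆ K. (b) If K is a finitely coherent SDS, then E(W) ≠ ∅ for every finite W ⊆ K. (c) If K̂ is a finitely coherent SDFS, then E(Ŵ) ≠ ∅ for every finite Ŵ ⊆ K̂. -/
universe u

variable {T : Type u}

/-! If `W` is empty, `cl ∅` is a coherent SDT. Otherwise, suppose every selection `σ` of `W` had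
`cl (σ W)` meeting the forbidden things, and pick a forbidden `t_σ ∈ cl (σ W)` for each `σ`. By
K5 the set of all `t_σ` is desirable, yet it lies inside `Tneg`, so by K3 the empty set is
desirable, against K1. Hence some `cl (σ W)` avoids `Tneg`: it is a coherent SDT, and it meets
every `A ∈ W` at `σ A`. -/

section Consistency

variable {cl : Set T → Set T} {Tneg : Set T}

lemma cohSDT_cl (hcl : IsClosure cl) {A : Set T} (hA : cl A ∩ Tneg = ∅) :
    CohSDT cl Tneg (cl A) :=
  ⟨hcl.2.2 A, hA⟩

lemma not_subset_forbidden_of_mem {K : Set (Set T)} (h1 : (∅ : Set T) ∉ K)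
    (h3 : ∀ A ∈ K, A \ Tneg ∈ K) {A : Set T} (hA : A ∈ K) : ¬ A ⊆ Tneg := fun hsub =>
  h1 (Set.sdiff_eq_empty.2 hsub ▸ h3 A hA)

lemma cl_image_sel_mem_ev (hcl : IsClosure cl) {W : Set (Set T)} (σ : Sel W)
    (hσ : cl (σ.1 '' W) ∩ Tneg = ∅) : cl (σ.1 '' W) ∈ ev cl Tneg W :=
  ⟨cohSDT_cl hcl hσ, fun A hA => ⟨σ.1 A, σ.2 A hA, hcl.1 _ ⟨A, hA, rfl⟩⟩⟩

lemma exists_sel_cl_image_inter_eq_empty {K W : Set (Set T)} (h1 : (∅ : Set T) ∉ K)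
    (h3 : ∀ A ∈ K, A \ Tneg ∈ K)
    (h5 : ∀ f : Sel W → T, (∀ σ : Sel W, f σ ∈ cl (σ.1 '' W)) → Set.range f ∈ K) :
    ∃ σ : Sel W, cl (σ.1 '' W) ∩ Tneg = ∅ := by
  by_contra! hmeet
  choose f hf using hmeet
  refine not_subset_forbidden_of_mem h1 h3 (h5 f fun σ => (hf σ).1) ?_
  rintro _ ⟨σ, rfl⟩
  exact (hf σ).2

lemma ev_nonempty (hcl : IsClosure cl) (hsan : cl (∅ : Set T) ∩ Tneg = ∅)
    {K W : Set (Set T)} (h1 : (∅ : Set T) ∉ K) (h3 : ∀ A ∈ K, A \ Tneg ∈ K)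
    (h5 : W.Nonempty →
      ∀ f : Sel W → T, (∀ σ : Sel W, f σ ∈ cl (σ.1 '' W)) → Set.range f ∈ K) :
    (ev cl Tneg W).Nonempty := by
  rcases W.eq_empty_or_nonempty with rfl | hW
  · exact ⟨cl ∅, cohSDT_cl hcl hsan, fun _ hA => hA.elim⟩
  · obtain ⟨σ, hσ⟩ := exists_sel_cl_image_inter_eq_empty h1 h3 (h5 hW)
    exact ⟨_, cl_image_sel_mem_ev hcl σ hσ⟩

end Consistency

theorem events_nonempty_general (T : Type u)
    (cl : Set T → Set T) (Tneg : Set T)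
    (hcl : IsClosure cl) (hsan : cl (∅ : Set T) ∩ Tneg = ∅) :
    (∀ K : Set (Set T), CohSDS cl Tneg K →
      ∀ W ⊆ K, (ev cl Tneg W).Nonempty) ∧
    (∀ K : Set (Set T), FinCohSDS cl Tneg K →
      ∀ W ⊆ K, W.Finite → (ev cl Tneg W).Nonempty) ∧
    (∀ K : Set (Set T), FinCohSDFS cl Tneg K →
      ∀ W ⊆ K, W.Finite → (ev cl Tneg W).Nonempty) :=
  ⟨fun _ ⟨h1, _, h3, _, h5⟩ W hW => ev_nonempty hcl hsan h1 h3 (h5 W hW),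
   fun _ ⟨h1, _, h3, _, h5⟩ W hW hfin => ev_nonempty hcl hsan h1 h3 (h5 W hW hfin),
   fun _ ⟨_, h1, _, h3, _, h5⟩ W hW hfin => ev_nonempty hcl hsan h1 h3 (h5 W hW hfin)⟩

/-- Consistency: events of subcollections of (finitely) coherent SD(F)Ses are
nonempty. -/
theorem events_nonempty (T : Type u) [Nonempty T]
    (cl : Set T → Set T) (Tneg : Set T)
    (hcl : IsClosure cl) (hsan : cl (∅ : Set T) ∩ Tneg = ∅) :
    (∀ K : Set (Set T), CohSDS cl Tneg K →
      ∀ W ⊆ K, (ev cl Tneg W).Nonempty) ∧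
    (∀ K : Set (Set T), FinCohSDS cl Tneg K →
      ∀ W ⊆ K, W.Finite → (ev cl Tneg W).Nonempty) ∧
    (∀ K : Set (Set T), FinCohSDFS cl Tneg K →
      ∀ W ⊆ K, W.Finite → (ev cl Tneg W).Nonempty) :=
  events_nonempty_general T cl Tneg hcl hsan
end

section
/- The collection E := {E(W) : W ⊆ 𝒫(T)} is closed under arbitrary intersections and arbitrary unions of nonempty families: for any nonempty family (W_i)_{i ∈ I} of subsets of 𝒫(T), ⋂_{i ∈ I} E(W_i) = E(⋃_{i ∈ I} W_i) ∈ E and ⋃_{i ∈ I} E(W_i) ∈ E; moreover ∅ = E({∅}) ∈ E and 𝔻 = E(∅) ∈ E. Consequently (E, ⊆) is a complete lattice of sets with union as join, intersection as meet, bottom ∅ and top 𝔻. Similarly, if I is finite and each W_i is a finite subset of 𝒫(T), then both ⋂_{i ∈ I} E(W_i) and ⋃_{i ∈ I} E(W_i) belong to E_fin := {E(W) : W a finite subset of 𝒫(T)}, so (E_fin, ⊆) is a bounded distributive lattice with bottom ∅ and top 𝔻. -/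
universe u

variable {T : Type u}

/-!
An event `E(W)` is the set of coherent SDTs meeting every member of `W`, so intersections of
events are events of unions of the families. For unions, distributivity does the work: a coherent
`D` lies in no `E(W_i)` iff for each `i` it misses some `A_i ∈ W_i`, i.e. iff it misses a union
`⋃ i, A_i` of a selection. Hence `⋃ i, E(W_i)` is the event of the family of these unions, which
is finite when `ι` and all `W_i` are.
-/

open Set

def selectionUnions {ι : Type*} (W : ι → Set (Set T)) : Set (Set T) :=
  (fun A : ι → Set T => ⋃ i, A i) '' univ.pi W

lemma selectionUnions_finite {ι : Type*} [Finite ι] {W : ι → Set (Set T)}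
    (hW : ∀ i, (W i).Finite) : (selectionUnions W).Finite :=
  (Set.Finite.pi hW).image _

lemma forall_selectionUnions_inter_nonempty_iff {ι : Type*} (W : ι → Set (Set T)) (D : Set T) :
    (∀ B ∈ selectionUnions W, (B ∩ D).Nonempty) ↔ ∃ i, ∀ A ∈ W i, (A ∩ D).Nonempty := by
  simp only [selectionUnions, forall_mem_image, mem_univ_pi, iUnion_inter,
    nonempty_iUnion]
  constructor
  · intro h
    by_contra! hmiss
    choose A hAW hAD using hmiss
    obtain ⟨i, hi⟩ := h hAW
    exact hi.ne_empty (hAD i)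
  · rintro ⟨i, hi⟩ A hA
    exact ⟨i, hi (A i) (hA i)⟩

section Events

variable (cl : Set T → Set T) (Tneg : Set T)

lemma ev_subset_cohSDT (W : Set (Set T)) : ev cl Tneg W ⊆ {D | CohSDT cl Tneg D} :=
  fun _ hD => hD.1

lemma ev_empty : ev cl Tneg ∅ = {D | CohSDT cl Tneg D} := by
  simp [ev]

lemma ev_singleton_empty : ev cl Tneg {∅} = ∅ := by
  simp [ev]

lemma iInter_ev {ι : Type*} [Nonempty ι] (W : ι → Set (Set T)) :
    ⋂ i, ev cl Tneg (W i) = ev cl Tneg (⋃ i, W i) := by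
  ext D
  simp only [ev, mem_iInter, mem_ofPred_eq, mem_iUnion, forall_exists_index]
  exact ⟨fun h => ⟨(h (Classical.arbitrary ι)).1, fun _ i hA => (h i).2 _ hA⟩,
    fun h i => ⟨h.1, fun _ hA => h.2 _ i hA⟩⟩

lemma iUnion_ev {ι : Type*} (W : ι → Set (Set T)) :
    ⋃ i, ev cl Tneg (W i) = ev cl Tneg (selectionUnions W) := by
  ext D
  simp only [ev, mem_iUnion, mem_ofPred_eq, forall_selectionUnions_inter_nonempty_iff,
    exists_and_left]

end Events

theorem event_lattices_general (T : Type u)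
    (cl : Set T → Set T) (Tneg : Set T) :
    (∀ (ι : Type u), Nonempty ι → ∀ Wf : ι → Set (Set T),
      (⋂ i, ev cl Tneg (Wf i)) = ev cl Tneg (⋃ i, Wf i)) ∧
    (∀ (ι : Type u), Nonempty ι → ∀ Wf : ι → Set (Set T),
      (⋂ i, ev cl Tneg (Wf i)) ∈ Ecal cl Tneg ∧
      (⋃ i, ev cl Tneg (Wf i)) ∈ Ecal cl Tneg) ∧
    ev cl Tneg {(∅ : Set T)} = (∅ : Set (Set T)) ∧
    (∅ : Set (Set T)) ∈ Ecal cl Tneg ∧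
    ev cl Tneg (∅ : Set (Set T)) = {D : Set T | CohSDT cl Tneg D} ∧
    {D : Set T | CohSDT cl Tneg D} ∈ Ecal cl Tneg ∧
    (∀ E ∈ Ecal cl Tneg, E ⊆ {D : Set T | CohSDT cl Tneg D}) ∧
    (∀ (ι : Type u), Nonempty ι → Finite ι → ∀ Wf : ι → Set (Set T),
      (∀ i, (Wf i).Finite) →
      (⋂ i, ev cl Tneg (Wf i)) ∈ Efin cl Tneg ∧
      (⋃ i, ev cl Tneg (Wf i)) ∈ Efin cl Tneg) ∧
    (∅ : Set (Set T)) ∈ Efin cl Tneg ∧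
    {D : Set T | CohSDT cl Tneg D} ∈ Efin cl Tneg := by
  refine ⟨fun ι _ Wf => iInter_ev cl Tneg Wf,
    fun ι _ Wf => ⟨⟨_, iInter_ev cl Tneg Wf⟩, ⟨_, iUnion_ev cl Tneg Wf⟩⟩,
    ev_singleton_empty cl Tneg, ⟨_, (ev_singleton_empty cl Tneg).symm⟩,
    ev_empty cl Tneg, ⟨_, (ev_empty cl Tneg).symm⟩,
    fun E ⟨W, hE⟩ => hE ▸ ev_subset_cohSDT cl Tneg W, ?_,
    ⟨_, finite_singleton _, (ev_singleton_empty cl Tneg).symm⟩,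
    ⟨_, finite_empty, (ev_empty cl Tneg).symm⟩⟩
  intro ι _ _ Wf hWf
  exact ⟨⟨_, finite_iUnion hWf, iInter_ev cl Tneg Wf⟩,
    ⟨_, selectionUnions_finite hWf, iUnion_ev cl Tneg Wf⟩⟩

/-- The collections of events `E` and `E_fin` are lattices of sets: `E` is
closed under arbitrary nonempty intersections and unions (a completely
distributive complete lattice of sets), with bottom `∅` and top `𝔻`; `E_fin`
is closed under nonempty finite intersections and unions (a bounded
distributive lattice of sets), with the same bottom and top. -/
theorem event_lattices (T : Type u) [Nonempty T]
    (cl : Set T → Set T) (Tneg : Set T)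
    (hcl : IsClosure cl) (hsan : cl (∅ : Set T) ∩ Tneg = ∅) :
    (∀ (ι : Type u), Nonempty ι → ∀ Wf : ι → Set (Set T),
      (⋂ i, ev cl Tneg (Wf i)) = ev cl Tneg (⋃ i, Wf i)) ∧
    (∀ (ι : Type u), Nonempty ι → ∀ Wf : ι → Set (Set T),
      (⋂ i, ev cl Tneg (Wf i)) ∈ Ecal cl Tneg ∧
      (⋃ i, ev cl Tneg (Wf i)) ∈ Ecal cl Tneg) ∧
    ev cl Tneg {(∅ : Set T)} = (∅ : Set (Set T)) ∧
    (∅ : Set (Set T)) ∈ Ecal cl Tneg ∧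
    ev cl Tneg (∅ : Set (Set T)) = {D : Set T | CohSDT cl Tneg D} ∧
    {D : Set T | CohSDT cl Tneg D} ∈ Ecal cl Tneg ∧
    (∀ E ∈ Ecal cl Tneg, E ⊆ {D : Set T | CohSDT cl Tneg D}) ∧
    (∀ (ι : Type u), Nonempty ι → Finite ι → ∀ Wf : ι → Set (Set T),
      (∀ i, (Wf i).Finite) →
      (⋂ i, ev cl Tneg (Wf i)) ∈ Efin cl Tneg ∧
      (⋃ i, ev cl Tneg (Wf i)) ∈ Efin cl Tneg) ∧
    (∅ : Set (Set T)) ∈ Efin cl Tneg ∧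
    {D : Set T | CohSDT cl Tneg D} ∈ Efin cl Tneg :=
  event_lattices_general T cl Tneg
end

section
/- Define f̂(K) := {E(W) : W a finite subset of K} for K ⊆ 𝒫(T), and d̂(F) := {A ⊆ T : 𝒟_A ∈ F} for F ⊆ E_fin. Then: (i) if K is a finitely coherent SDS, f̂(K) is a proper filter on (E_fin, ⊆); (ii) if F is a proper filter on (E_fin, ⊆), then d̂(F) is a finitely coherent SDS; (iii) d̂(f̂(K)) = K for every finitely coherent SDS K; (iv) f̂(d̂(F)) = F for every proper filter F on (E_fin, ⊆); (v) K₁ ⊆ K₂ implies f̂(K₁) ⊆ f̂(K₂), and F₁ ⊆ F₂ implies d̂(F₁) ⊆ d̂(F₂). Hence f̂ is an order isomorphism between the finitely coherent SDSes ordered by inclusion and the proper filters on (E_fin, ⊆) ordered by inclusion, with inverse d̂. -/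
universe u

variable {T : Type u}

section Aux

variable (cl : Set T → Set T) (Tneg : Set T)

lemma ev_subset_evA {W : Set (Set T)} {A : Set T} (hA : A ∈ W) :
    ev cl Tneg W ⊆ evA cl Tneg A :=
  fun D hD => ⟨hD.1, hD.2 A hA⟩

lemma evA_eq_ev_singleton (A : Set T) :
    evA cl Tneg A = ev cl Tneg {A} := by
  ext D; simp [evA, ev]

lemma ev_union (W₁ W₂ : Set (Set T)) :
    ev cl Tneg (W₁ ∪ W₂) = ev cl Tneg W₁ ∩ ev cl Tneg W₂ := by
  ext D
  constructor
  · rintro ⟨h1, h2⟩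
    exact ⟨⟨h1, fun A hA => h2 A (Or.inl hA)⟩, ⟨h1, fun A hA => h2 A (Or.inr hA)⟩⟩
  · rintro ⟨⟨h1, h2⟩, ⟨h3, h4⟩⟩
    exact ⟨h1, fun A hA => hA.elim (h2 A) (h4 A)⟩

lemma ev_insert (A : Set T) (W : Set (Set T)) :
    ev cl Tneg (insert A W) = evA cl Tneg A ∩ ev cl Tneg W := by
  rw [evA_eq_ev_singleton, ← ev_union, Set.singleton_union]

lemma ev_subset_ev_empty (W : Set (Set T)) :
    ev cl Tneg W ⊆ ev cl Tneg (∅ : Set (Set T)) :=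
  fun _ hD => ⟨hD.1, by simp⟩

lemma evA_mem_Efin (A : Set T) : evA cl Tneg A ∈ Efin cl Tneg :=
  ⟨{A}, Set.finite_singleton A, evA_eq_ev_singleton cl Tneg A⟩

lemma ev_empty_mem_filter {F : Set (Set (Set T))}
    (hF : IsFilterOn (Efin cl Tneg) F) :
    ev cl Tneg (∅ : Set (Set T)) ∈ F := by
  obtain ⟨hFE, ⟨E, hE⟩, hup, hint⟩ := hF
  obtain ⟨W, hWfin, rfl⟩ := hFE hE
  exact hup _ hE _ ⟨∅, Set.finite_empty, rfl⟩ (ev_subset_ev_empty cl Tneg W)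

lemma ev_mem_filter {F : Set (Set (Set T))}
    (hF : IsFilterOn (Efin cl Tneg) F) {W : Set (Set T)} (hWfin : W.Finite)
    (h : ∀ A ∈ W, evA cl Tneg A ∈ F) :
    ev cl Tneg W ∈ F := by
  refine Set.Finite.induction_on
    (motive := fun W _ => (∀ A ∈ W, evA cl Tneg A ∈ F) → ev cl Tneg W ∈ F)
    W hWfin (fun _ => ev_empty_mem_filter cl Tneg hF) ?_ h
  intro A W hni hfin ih h
  rw [ev_insert]
  exact hF.2.2.2 _ (h A (Set.mem_insert A W))
    _ (ih fun B hB => h B (Set.mem_insert_of_mem A hB))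

/-- Key lemma: if every coherent SDT meeting all members of a finite `W ⊆ K`
also meets `A`, then `A ∈ K`. -/
lemma mem_of_ev_subset [Nonempty T]
    (hcl : IsClosure cl) (hsan : cl (∅ : Set T) ∩ Tneg = ∅)
    {K : Set (Set T)} (hK : FinCohSDS cl Tneg K)
    {W : Set (Set T)} (hWK : W ⊆ K) (hWfin : W.Finite)
    {A : Set T} (hsub : ev cl Tneg W ⊆ evA cl Tneg A) :
    A ∈ K := by
  classical
  obtain ⟨hK1, hK2, hK3, hK4, hK5⟩ := hK
  obtain ⟨hsub1, hmono, hidem⟩ := hcl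
  rcases W.eq_empty_or_nonempty with rfl | hWne
  · have hcoh : CohSDT cl Tneg (cl ∅) := ⟨hidem ∅, hsan⟩
    have hmem : cl (∅ : Set T) ∈ ev cl Tneg (∅ : Set (Set T)) := ⟨hcoh, by simp⟩
    obtain ⟨t, htA, htcl⟩ := (hsub hmem).2
    exact hK2 {t} (hK4 t htcl) A (Set.singleton_subset_iff.2 htA)
  · have hchoice : ∀ σ : Sel W, ∃ t, t ∈ cl (σ.1 '' W) ∧ (t ∈ A ∨ t ∈ Tneg) := by
      intro σ
      by_cases hbad : (cl (σ.1 '' W) ∩ Tneg).Nonempty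
      · obtain ⟨t, ht1, ht2⟩ := hbad
        exact ⟨t, ht1, Or.inr ht2⟩
      · have hcoh : CohSDT cl Tneg (cl (σ.1 '' W)) :=
          ⟨hidem _, Set.not_nonempty_iff_eq_empty.1 hbad⟩
        have hmem : cl (σ.1 '' W) ∈ ev cl Tneg W :=
          ⟨hcoh, fun B hB => ⟨σ.1 B, σ.2 B hB, hsub1 _ ⟨B, hB, rfl⟩⟩⟩
        obtain ⟨t, htA, htD⟩ := (hsub hmem).2
        exact ⟨t, htD, Or.inl htA⟩
    choose f hf1 hf2 using hchoice
    have hrange : Set.range f ∈ K := hK5 W hWK hWfin hWne f hf1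
    have hsubA : Set.range f \ Tneg ⊆ A := by
      rintro t ⟨⟨σ, rfl⟩, htn⟩
      exact (hf2 σ).elim id fun h => absurd h htn
    exact hK2 _ (hK3 _ hrange) A hsubA

end Aux

/-- Order isomorphism between the finitely coherent SDSes and the proper
filters on `(E_fin, ⊆)`. -/
theorem finCohSDS_filter_isomorphism (T : Type u) [Nonempty T]
    (cl : Set T → Set T) (Tneg : Set T)
    (hcl : IsClosure cl) (hsan : cl (∅ : Set T) ∩ Tneg = ∅) :
    (∀ K : Set (Set T), FinCohSDS cl Tneg K →
      IsProperFilterOn (Efin cl Tneg) (fhat cl Tneg K)) ∧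
    (∀ F : Set (Set (Set T)), IsProperFilterOn (Efin cl Tneg) F →
      FinCohSDS cl Tneg (dmap cl Tneg F)) ∧
    (∀ K : Set (Set T), FinCohSDS cl Tneg K →
      dmap cl Tneg (fhat cl Tneg K) = K) ∧
    (∀ F : Set (Set (Set T)), IsProperFilterOn (Efin cl Tneg) F →
      fhat cl Tneg (dmap cl Tneg F) = F) ∧
    (∀ K₁ K₂ : Set (Set T), K₁ ⊆ K₂ → fhat cl Tneg K₁ ⊆ fhat cl Tneg K₂) ∧
    (∀ F₁ F₂ : Set (Set (Set T)), F₁ ⊆ F₂ →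
      dmap cl Tneg F₁ ⊆ dmap cl Tneg F₂) := by
  classical
  refine ⟨?_, ?_, ?_, ?_, ?_, ?_⟩
  · -- (i)
    intro K hK
    refine ⟨⟨?_, ?_, ?_, ?_⟩, ?_⟩
    · rintro E ⟨W, _, hWfin, rfl⟩
      exact ⟨W, hWfin, rfl⟩
    · exact ⟨ev cl Tneg ∅, ∅, Set.empty_subset K, Set.finite_empty, rfl⟩
    · rintro E₁ ⟨W₁, hW₁K, hW₁fin, rfl⟩ E₂ ⟨W₂, hW₂fin, rfl⟩ hsub
      refine ⟨W₂, fun A hA => ?_, hW₂fin, rfl⟩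
      exact mem_of_ev_subset cl Tneg hcl hsan hK hW₁K hW₁fin
        (fun D hD => ev_subset_evA cl Tneg hA (hsub hD))
    · rintro E₁ ⟨W₁, hW₁K, hW₁fin, rfl⟩ E₂ ⟨W₂, hW₂K, hW₂fin, rfl⟩
      exact ⟨W₁ ∪ W₂, Set.union_subset hW₁K hW₂K, hW₁fin.union hW₂fin,
        (ev_union cl Tneg W₁ W₂).symm⟩
    · intro heq
      have h0 : evA cl Tneg (∅ : Set T) ∈ fhat cl Tneg K := by
        rw [heq]; exact evA_mem_Efin cl Tneg ∅
      obtain ⟨W, hWK, hWfin, hWeq⟩ := h0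
      exact hK.1 (mem_of_ev_subset cl Tneg hcl hsan hK hWK hWfin hWeq.symm.subset)
  · -- (ii)
    intro F hF
    obtain ⟨hFfil, hFne⟩ := hF
    have hFE := hFfil.1
    have hup := hFfil.2.2.1
    refine ⟨?_, ?_, ?_, ?_, ?_⟩
    · -- K1
      intro hmem
      apply hFne
      refine Set.Subset.antisymm hFE fun E hE => ?_
      have h0 : evA cl Tneg (∅ : Set T) = (∅ : Set (Set T)) := by
        ext D; simp [evA]
      exact hup _ hmem E hE (by rw [h0]; exact Set.empty_subset E)
    · -- K2
      intro A₁ hA₁ A₂ hsub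
      refine hup _ hA₁ _ (evA_mem_Efin cl Tneg A₂) ?_
      rintro D ⟨hc, t, ht1, ht2⟩
      exact ⟨hc, t, hsub ht1, ht2⟩
    · -- K3
      intro A hA
      have heq : evA cl Tneg (A \ Tneg) = evA cl Tneg A := by
        ext D
        constructor
        · rintro ⟨hc, t, ⟨ht1, _⟩, ht2⟩
          exact ⟨hc, t, ht1, ht2⟩
        · rintro ⟨hc, t, ht1, ht2⟩
          refine ⟨hc, t, ⟨ht1, fun htn => ?_⟩, ht2⟩
          exact Set.eq_empty_iff_forall_notMem.1 hc.2 t ⟨ht2, htn⟩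
      show evA cl Tneg (A \ Tneg) ∈ F
      rw [heq]; exact hA
    · -- K4
      intro t ht
      have h1 : evA cl Tneg ({t} : Set T) = ev cl Tneg (∅ : Set (Set T)) := by
        ext D
        constructor
        · rintro ⟨hc, _⟩
          exact ⟨hc, by simp⟩
        · rintro ⟨hc, _⟩
          refine ⟨hc, t, rfl, ?_⟩
          have h2 : cl (∅ : Set T) ⊆ cl D := hcl.2.1 ∅ D (Set.empty_subset D)
          rw [hc.1] at h2
          exact h2 ht
      show evA cl Tneg ({t} : Set T) ∈ F
      rw [h1]; exact ev_empty_mem_filter cl Tneg hFfil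
    · -- K5fin
      intro W hWd hWfin hWne f hf
      have hEW : ev cl Tneg W ∈ F := ev_mem_filter cl Tneg hFfil hWfin hWd
      refine hup _ hEW _ (evA_mem_Efin cl Tneg _) ?_
      rintro D ⟨hc, hmeet⟩
      set σ0 : Set T → T :=
        fun A => if h : (A ∩ D).Nonempty then h.some else Classical.arbitrary T with hσ0
      have hσmem : ∀ A ∈ W, σ0 A ∈ A ∩ D := by
        intro A hA
        simp only [hσ0]
        rw [dif_pos (hmeet A hA)]
        exact (hmeet A hA).some_mem
      set σ : Sel W := ⟨σ0, fun A hA => (hσmem A hA).1⟩ with hσ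
      refine ⟨hc, f σ, ⟨σ, rfl⟩, ?_⟩
      have himg : cl (σ0 '' W) ⊆ D := by
        have h2 : cl (σ0 '' W) ⊆ cl D := by
          refine hcl.2.1 _ _ ?_
          rintro x ⟨B, hB, rfl⟩
          exact (hσmem B hB).2
        rw [hc.1] at h2
        exact h2
      exact himg (hf σ)
  · -- (iii)
    intro K hK
    ext A
    constructor
    · rintro ⟨W, hWK, hWfin, hWeq⟩
      exact mem_of_ev_subset cl Tneg hcl hsan hK hWK hWfin hWeq.symm.subset
    · intro hA
      exact ⟨{A}, Set.singleton_subset_iff.2 hA, Set.finite_singleton A,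
        evA_eq_ev_singleton cl Tneg A⟩
  · -- (iv)
    intro F hF
    obtain ⟨hFfil, hFne⟩ := hF
    ext E
    constructor
    · rintro ⟨W, hWd, hWfin, rfl⟩
      exact ev_mem_filter cl Tneg hFfil hWfin hWd
    · intro hE
      obtain ⟨W, hWfin, rfl⟩ := hFfil.1 hE
      exact ⟨W, fun A hA => hFfil.2.2.1 _ hE _ (evA_mem_Efin cl Tneg A)
        (ev_subset_evA cl Tneg hA), hWfin, rfl⟩
  · -- (v) fhat monotone
    rintro K₁ K₂ hsub E ⟨W, hWK, hWfin, rfl⟩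
    exact ⟨W, hWK.trans hsub, hWfin, rfl⟩
  · -- (v) dmap monotone
    intro F₁ F₂ hsub A hA
    exact hsub hA
end

section
/- For any K ⊆ 𝒫(T): (i) K is finitely consistent if and only if E(W) = {D ∈ 𝔻 : W ⊆ sds(D)} is nonempty for every finite W ⊆ K; (ii) cl_fin(K) = ⋃_{W finite, W ⊆ K} ⋂_{D ∈ 𝔻 with W ⊆ sds(D)} sds(D); (iii) K is a finitely coherent SDS if and only if K is finitely consistent and K = ⋃_{W finite, W ⊆ K} ⋂_{D ∈ 𝔻 with W ⊆ sds(D)} sds(D). -/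
universe u

variable {T : Type u}

/-!
A set `B` outside a finitely coherent `K` is avoided by a coherent SDT meeting any given finite
`W ⊆ K`: if every selection `σ` of `{A \ Tneg | A ∈ W}` had `cl (σ W)` meeting `B ∪ Tneg`, K5
would put into `K` a set whose part outside `Tneg` lies in `B`. Hence `K` contains the
conjunctive representation of each of its subsets. Conversely, that representation is finitely
coherent whenever every `E(W)` is nonempty, because a coherent SDT meeting each member of `V`
contains `cl (σ V)` for a selection `σ` into it.
-/

def conjRepr (cl : Set T → Set T) (Tneg : Set T) (K : Set (Set T)) : Set (Set T) :=
  ⋃ W ∈ {W : Set (Set T) | W.Finite ∧ W ⊆ K}, ⋂ D ∈ ev cl Tneg W, sds D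

section ConjunctiveRepresentation

variable {cl : Set T → Set T} {Tneg : Set T}

theorem IsClosure.monotone (hcl : IsClosure cl) : Monotone cl :=
  fun A B h => hcl.2.1 A B h

theorem ev_anti {W₁ W₂ : Set (Set T)} (h : W₁ ⊆ W₂) : ev cl Tneg W₂ ⊆ ev cl Tneg W₁ :=
  fun _ hD => ⟨hD.1, fun A hA => hD.2 A (h hA)⟩

theorem mem_conjRepr {K : Set (Set T)} {A : Set T} :
    A ∈ conjRepr cl Tneg K ↔
      ∃ W : Set (Set T), W.Finite ∧ W ⊆ K ∧ ∀ D ∈ ev cl Tneg W, (A ∩ D).Nonempty := by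
  simp [conjRepr, sds, and_assoc]

theorem subset_conjRepr (K : Set (Set T)) : K ⊆ conjRepr cl Tneg K :=
  fun A hA => mem_conjRepr.2 ⟨{A}, Set.finite_singleton A, Set.singleton_subset_iff.2 hA,
    fun _ hD => hD.2 A rfl⟩

theorem exists_finite_forcing_of_subset_conjRepr {K V : Set (Set T)}
    (hV : V ⊆ conjRepr cl Tneg K) (hVfin : V.Finite) :
    ∃ W : Set (Set T), W.Finite ∧ W ⊆ K ∧ ∀ D ∈ ev cl Tneg W, V ⊆ sds D := by
  choose W hWfin hWK hW using fun A (hA : A ∈ V) => mem_conjRepr.1 (hV hA)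
  refine ⟨⋃ (A) (hA : A ∈ V), W A hA, hVfin.biUnion' hWfin,
    Set.iUnion₂_subset hWK, fun D hD A hA => hW A hA D ?_⟩
  exact ev_anti (Set.subset_iUnion₂ (s := fun A (hA : A ∈ V) => W A hA) A hA) hD

theorem range_mem_sds_of_subset_sds (hmono : Monotone cl) {D : Set T} (hD : cl D = D)
    {V : Set (Set T)} (hVD : V ⊆ sds D) (hVne : V.Nonempty)
    (f : Sel V → T) (hf : ∀ σ : Sel V, f σ ∈ cl (σ.1 '' V)) :
    Set.range f ∈ sds D := by
  have : Nonempty T := ⟨(hVD hVne.some_mem).some⟩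
  choose! σ hσA hσD using fun A (hA : A ∈ V) => hVD hA
  have hσV : σ '' V ⊆ D := Set.image_subset_iff.2 hσD
  exact ⟨f ⟨σ, hσA⟩, ⟨_, rfl⟩, hD ▸ hmono hσV (hf ⟨σ, hσA⟩)⟩

theorem conjRepr_finCohSDS (hcl : IsClosure cl) {K : Set (Set T)}
    (hcons : ∀ W ⊆ K, W.Finite → (ev cl Tneg W).Nonempty) :
    FinCohSDS cl Tneg (conjRepr cl Tneg K) := by
  refine ⟨fun hempty => ?_, fun A₁ hA₁ A₂ hA => ?_, fun A hA => ?_, fun t ht => ?_, ?_⟩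
  · obtain ⟨W, hWfin, hWK, hW⟩ := mem_conjRepr.1 hempty
    obtain ⟨D, hD⟩ := hcons W hWK hWfin
    simpa using hW D hD
  · obtain ⟨W, hWfin, hWK, hW⟩ := mem_conjRepr.1 hA₁
    exact mem_conjRepr.2 ⟨W, hWfin, hWK, fun D hD => (hW D hD).mono (by gcongr)⟩
  · obtain ⟨W, hWfin, hWK, hW⟩ := mem_conjRepr.1 hA
    refine mem_conjRepr.2 ⟨W, hWfin, hWK, fun D hD => ?_⟩
    obtain ⟨s, hsA, hsD⟩ := hW D hD
    exact ⟨s, ⟨hsA, fun hs => hD.1.2.subset ⟨hsD, hs⟩⟩, hsD⟩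
  · refine mem_conjRepr.2 ⟨∅, Set.finite_empty, Set.empty_subset K, fun D hD => ?_⟩
    exact ⟨t, rfl, hD.1.1 ▸ hcl.monotone (Set.empty_subset D) ht⟩
  · intro V hV hVfin hVne f hf
    obtain ⟨W, hWfin, hWK, hW⟩ := exists_finite_forcing_of_subset_conjRepr hV hVfin
    exact mem_conjRepr.2 ⟨W, hWfin, hWK, fun D hD =>
      range_mem_sds_of_subset_sds hcl.monotone hD.1.1 (hW D hD) hVne f hf⟩

namespace FinCohSDS

variable {K : Set (Set T)}

theorem exists_transversal_disjoint_cl (hK : FinCohSDS cl Tneg K) {W : Set (Set T)}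
    (hWK : W ⊆ K) (hWfin : W.Finite) {B : Set T} (hB : B ∉ K) :
    ∃ S : Set T, (∀ A ∈ W, (A ∩ S).Nonempty) ∧ Disjoint (cl S) B := by
  obtain ⟨-, hup, -, hcl_empty, hK5⟩ := hK
  rcases W.eq_empty_or_nonempty with rfl | hWne
  · refine ⟨∅, by simp, Set.disjoint_left.2 fun t ht htB => hB ?_⟩
    exact hup _ (hcl_empty t ht) B (Set.singleton_subset_iff.2 htB)
  by_contra! hmeet
  have hsel : ∀ σ : Sel W, ∀ A ∈ W, (A ∩ σ.1 '' W).Nonempty :=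
    fun σ A hA => ⟨σ.1 A, σ.2 A hA, A, hA, rfl⟩
  choose f hfcl hfB using fun σ : Sel W => Set.not_disjoint_iff.1 (hmeet _ (hsel σ))
  exact hB (hup _ (hK5 W hWK hWfin hWne f hfcl) B (Set.range_subset_iff.2 hfB))

/-- `D` is the closure of a transversal of `{A \ Tneg | A ∈ W}` avoiding
`B ∪ Tneg`. -/
theorem exists_mem_ev_disjoint (hcl : IsClosure cl) (hK : FinCohSDS cl Tneg K)
    {W : Set (Set T)} (hWK : W ⊆ K) (hWfin : W.Finite) {B : Set T} (hB : B ∉ K) :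
    ∃ D ∈ ev cl Tneg W, Disjoint B D := by
  obtain ⟨-, hup, hdiff, -⟩ := id hK
  obtain ⟨hext, -, hidem⟩ := hcl
  have hWK' : (· \ Tneg) '' W ⊆ K := Set.image_subset_iff.2 fun A hA => hdiff A (hWK hA)
  have hB' : B ∪ Tneg ∉ K := fun h =>
    hB (hup _ (hdiff _ h) B fun t ht => ht.1.resolve_right ht.2)
  obtain ⟨S, hS, hSB⟩ := hK.exists_transversal_disjoint_cl hWK' (hWfin.image _) hB'
  refine ⟨cl S, ⟨⟨hidem S, (hSB.mono_right Set.subset_union_right).eq_bot⟩, fun A hA => ?_⟩,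
    (hSB.mono_right Set.subset_union_left).symm⟩
  obtain ⟨t, htA, htS⟩ := hS _ ⟨A, hA, rfl⟩
  exact ⟨t, htA.1, hext S htS⟩

theorem ev_nonempty (hcl : IsClosure cl) (hK : FinCohSDS cl Tneg K) {W : Set (Set T)}
    (hWK : W ⊆ K) (hWfin : W.Finite) : (ev cl Tneg W).Nonempty :=
  let ⟨D, hD, _⟩ := hK.exists_mem_ev_disjoint hcl hWK hWfin hK.1
  ⟨D, hD⟩

theorem conjRepr_subset (hcl : IsClosure cl) (hK : FinCohSDS cl Tneg K) {K₀ : Set (Set T)}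
    (hK₀ : K₀ ⊆ K) : conjRepr cl Tneg K₀ ⊆ K := by
  intro A hA
  obtain ⟨W, hWfin, hWK₀, hW⟩ := mem_conjRepr.1 hA
  by_contra hAK
  obtain ⟨D, hD, hAD⟩ := hK.exists_mem_ev_disjoint hcl (hWK₀.trans hK₀) hWfin hAK
  exact (hW D hD).not_disjoint hAD

end FinCohSDS

theorem finConsistent_iff (hcl : IsClosure cl) (K : Set (Set T)) :
    FinConsistent cl Tneg K ↔ ∀ W ⊆ K, W.Finite → (ev cl Tneg W).Nonempty :=
  ⟨fun ⟨_, hK', hKK'⟩ _ hWK hWfin => hK'.ev_nonempty hcl (hWK.trans hKK') hWfin,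
    fun hcons => ⟨_, conjRepr_finCohSDS hcl hcons, subset_conjRepr K⟩⟩

theorem clFin_eq_conjRepr (hcl : IsClosure cl) (K : Set (Set T)) :
    clFin cl Tneg K = conjRepr cl Tneg K := by
  refine Set.Subset.antisymm ?_ (Set.subset_sInter fun K' hK' => hK'.1.conjRepr_subset hcl hK'.2)
  by_cases hcons : ∀ W ⊆ K, W.Finite → (ev cl Tneg W).Nonempty
  · exact Set.sInter_subset_of_mem ⟨conjRepr_finCohSDS hcl hcons, subset_conjRepr K⟩
  · -- an inconsistent finite `W ⊆ K` puts every set into the representation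
    push Not at hcons
    obtain ⟨W, hWK, hWfin, hW⟩ := hcons
    exact fun A _ => mem_conjRepr.2 ⟨W, hWfin, hWK, by simp [hW]⟩

theorem finCohSDS_iff (hcl : IsClosure cl) (K : Set (Set T)) :
    FinCohSDS cl Tneg K ↔ FinConsistent cl Tneg K ∧ K = conjRepr cl Tneg K := by
  refine ⟨fun hK => ⟨⟨K, hK, subset_rfl⟩, ?_⟩, fun ⟨hc, hKR⟩ => ?_⟩
  · exact (subset_conjRepr K).antisymm (hK.conjRepr_subset hcl subset_rfl)
  · rw [hKR]
    exact conjRepr_finCohSDS hcl ((finConsistent_iff hcl K).1 hc)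

end ConjunctiveRepresentation

theorem conjunctive_representation_finitary_general (T : Type u)
    (cl : Set T → Set T) (Tneg : Set T)
    (hcl : IsClosure cl)
    (K : Set (Set T)) :
    (FinConsistent cl Tneg K ↔
      ∀ W ⊆ K, W.Finite →
        {D : Set T | CohSDT cl Tneg D ∧ W ⊆ sds D}.Nonempty) ∧
    (clFin cl Tneg K =
      ⋃ W ∈ {W : Set (Set T) | W.Finite ∧ W ⊆ K},
        ⋂ D ∈ {D : Set T | CohSDT cl Tneg D ∧ W ⊆ sds D}, sds D) ∧
    (FinCohSDS cl Tneg K ↔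
      (FinConsistent cl Tneg K ∧
        K = ⋃ W ∈ {W : Set (Set T) | W.Finite ∧ W ⊆ K},
          ⋂ D ∈ {D : Set T | CohSDT cl Tneg D ∧ W ⊆ sds D}, sds D)) :=
  ⟨finConsistent_iff hcl K, clFin_eq_conjRepr hcl K, finCohSDS_iff hcl K⟩

/-- Conjunctive representation of finite consistency, the finitary closure
operator, and finite coherence. -/
theorem conjunctive_representation_finitary (T : Type u) [Nonempty T]
    (cl : Set T → Set T) (Tneg : Set T)
    (hcl : IsClosure cl) (hsan : cl (∅ : Set T) ∩ Tneg = ∅)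
    (K : Set (Set T)) :
    (FinConsistent cl Tneg K ↔
      ∀ W ⊆ K, W.Finite →
        {D : Set T | CohSDT cl Tneg D ∧ W ⊆ sds D}.Nonempty) ∧
    (clFin cl Tneg K =
      ⋃ W ∈ {W : Set (Set T) | W.Finite ∧ W ⊆ K},
        ⋂ D ∈ {D : Set T | CohSDT cl Tneg D ∧ W ⊆ sds D}, sds D) ∧
    (FinCohSDS cl Tneg K ↔
      (FinConsistent cl Tneg K ∧
        K = ⋃ W ∈ {W : Set (Set T) | W.Finite ∧ W ⊆ K},
          ⋂ D ∈ {D : Set T | CohSDT cl Tneg D ∧ W ⊆ sds D}, sds D)) :=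
  conjunctive_representation_finitary_general T cl Tneg hcl K
end

section
/- A finitely consistent SDS K ⊆ 𝒫(T) is finitely coherent if and only if K = ⋂{K' : K' a complete finitely coherent SDS with K ⊆ K'}. -/
universe u

variable {T : Type u}

section AuxPrimeFilter

variable {T : Type u} {cl : Set T → Set T} {Tneg : Set T}

/-- Restrict a selection map to a subcollection. -/
def Sel.restrict {W W' : Set (Set T)} (h : W ⊆ W') (τ : Sel W') : Sel W :=
  ⟨τ.1, fun A hA => τ.2 A (h hA)⟩

/-- The SDS generated by `M ∪ {B}` under K2, K3, K5fin. -/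
def gen (cl : Set T → Set T) (Tneg : Set T) (M : Set (Set T)) (B : Set T) :
    Set (Set T) :=
  {C | ∃ W : Set (Set T), W ⊆ insert B M ∧ W.Finite ∧ W.Nonempty ∧
    ∃ f : Sel W → T, (∀ σ : Sel W, f σ ∈ cl (σ.1 '' W)) ∧ Set.range f \ Tneg ⊆ C}

lemma gen_mono_target {M : Set (Set T)} {B C₁ C₂ : Set T}
    (h : C₁ ∈ gen cl Tneg M B) (hsub : C₁ ⊆ C₂) : C₂ ∈ gen cl Tneg M B := by
  obtain ⟨W, h1, h2, h3, f, h4, h5⟩ := h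
  exact ⟨W, h1, h2, h3, f, h4, h5.trans hsub⟩

lemma mem_gen (hcl : IsClosure cl) {M : Set (Set T)} {B D : Set T}
    (hD : D ∈ insert B M) : D ∈ gen cl Tneg M B := by
  refine ⟨{D}, by simpa using hD, Set.finite_singleton D, ⟨D, rfl⟩,
    fun σ => σ.1 D, fun σ => ?_, ?_⟩
  · rw [Set.image_singleton]
    exact hcl.1 _ rfl
  · rintro x ⟨⟨σ, rfl⟩, -⟩
    exact σ.2 D rfl

lemma gen_K5 [Nonempty T] (hcl : IsClosure cl) {M : Set (Set T)} {B : Set T} :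
    ∀ W ⊆ gen cl Tneg M B, W.Finite → W.Nonempty →
      ∀ f : Sel W → T, (∀ σ : Sel W, f σ ∈ cl (σ.1 '' W)) →
        Set.range f ∈ gen cl Tneg M B := by
  classical
  intro W hW hWfin hWne f hf
  have h' : ∀ C : Set T, ∃ (W₀ : Set (Set T)) (g : Sel W₀ → T),
      C ∈ W → W₀ ⊆ insert B M ∧ W₀.Finite ∧ W₀.Nonempty ∧
        (∀ σ : Sel W₀, g σ ∈ cl (σ.1 '' W₀)) ∧ Set.range g \ Tneg ⊆ C := by
    intro C
    by_cases hC : C ∈ W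
    · obtain ⟨W₀, h1, h2, h3, g, h4, h5⟩ := hW hC
      exact ⟨W₀, g, fun _ => ⟨h1, h2, h3, h4, h5⟩⟩
    · exact ⟨∅, fun _ => Classical.arbitrary T, fun h => absurd h hC⟩
  choose w g hwit using h'
  set W' : Set (Set T) := ⋃ C ∈ W, w C with hW'def
  have hsub : ∀ C ∈ W, w C ⊆ W' := fun C hC => Set.subset_biUnion_of_mem hC
  have hW'sub : W' ⊆ insert B M := Set.iUnion₂_subset fun C hC => (hwit C hC).1
  have hW'fin : W'.Finite := hWfin.biUnion fun C hC => (hwit C hC).2.1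
  obtain ⟨C₀, hC₀⟩ := hWne
  have hW'ne : W'.Nonempty := ((hwit C₀ hC₀).2.2.1).mono (hsub C₀ hC₀)
  -- the composed candidate values
  set t : Sel W' → Set T → T := fun τ C =>
    if hC : C ∈ W then g C (Sel.restrict (hsub C hC) τ) else Classical.arbitrary T
    with htdef
  have ht_cl : ∀ (τ : Sel W') (C : Set T), C ∈ W → t τ C ∈ cl (τ.1 '' W') := by
    intro τ C hC
    have h0 := (hwit C hC).2.2.2.1 (Sel.restrict (hsub C hC) τ)
    simp only [htdef, dif_pos hC]
    exact hcl.2.1 _ _ (Set.image_mono (hsub C hC)) h0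
  have ht_rg : ∀ (τ : Sel W') (C : Set T) (hC : C ∈ W),
      t τ C ∈ Set.range (g C) := by
    intro τ C hC
    simp only [htdef, dif_pos hC]
    exact ⟨_, rfl⟩
  have hsel : ∀ τ : Sel W', (¬ ∃ C ∈ W, t τ C ∈ Tneg) → ∀ C ∈ W, t τ C ∈ C := by
    intro τ hgood C hC
    push_neg at hgood
    exact (hwit C hC).2.2.2.2 ⟨ht_rg τ C hC, hgood C hC⟩
  set F : Sel W' → T := fun τ =>
    if hbad : ∃ C ∈ W, t τ C ∈ Tneg then t τ hbad.choose
    else f ⟨t τ, hsel τ hbad⟩ with hFdef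
  refine ⟨W', hW'sub, hW'fin, hW'ne, F, ?_, ?_⟩
  · intro τ
    by_cases hbad : ∃ C ∈ W, t τ C ∈ Tneg
    · simp only [hFdef, dif_pos hbad]
      exact ht_cl τ hbad.choose hbad.choose_spec.1
    · simp only [hFdef, dif_neg hbad]
      have h1 : f ⟨t τ, hsel τ hbad⟩ ∈ cl (t τ '' W) := hf ⟨t τ, hsel τ hbad⟩
      have h2 : t τ '' W ⊆ cl (τ.1 '' W') := by
        rintro x ⟨C, hC, rfl⟩
        exact ht_cl τ C hC
      have h3 : cl (t τ '' W) ⊆ cl (τ.1 '' W') := by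
        have := hcl.2.1 _ _ h2
        rwa [hcl.2.2] at this
      exact h3 h1
  · rintro x ⟨⟨τ, rfl⟩, hxn⟩
    by_cases hbad : ∃ C ∈ W, t τ C ∈ Tneg
    · exfalso
      apply hxn
      simpa only [hFdef, dif_pos hbad] using hbad.choose_spec.2
    · simp only [hFdef, dif_neg hbad]
      exact ⟨_, rfl⟩

lemma gen_fincoh [Nonempty T] (hcl : IsClosure cl) {M : Set (Set T)}
    (hM : FinCohSDS cl Tneg M) (B : Set T) (h0 : (∅ : Set T) ∉ gen cl Tneg M B) :
    FinCohSDS cl Tneg (gen cl Tneg M B) := by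
  refine ⟨h0, ?_, ?_, ?_, gen_K5 hcl⟩
  · intro A₁ hA₁ A₂ hsub
    exact gen_mono_target hA₁ hsub
  · rintro A ⟨W, h1, h2, h3, f, h4, h5⟩
    exact ⟨W, h1, h2, h3, f, h4, fun x hx => ⟨h5 hx, hx.2⟩⟩
  · intro s hs
    exact mem_gen hcl (Set.mem_insert_of_mem _ (hM.2.2.2.1 s hs))

/-- Auxiliary selection construction for the completeness argument. -/
lemma sel_aux [Nonempty T] {W W₁ M : Set (Set T)} {A₁ : Set T}
    (hW₁ : W₁ ⊆ insert A₁ M) (hsub : W₁ ∩ M ⊆ W) (τ : Sel W) {u : T}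
    (hu : u ∈ A₁) : ∃ σ : Sel W₁, σ.1 '' W₁ ⊆ insert u (τ.1 '' W) := by
  classical
  refine ⟨⟨fun C => if C = A₁ then u else τ.1 C, ?_⟩, ?_⟩
  · intro C hC
    by_cases h : C = A₁
    · simp only [if_pos h]; rw [h]; exact hu
    · simp only [if_neg h]
      have hCM : C ∈ M := by
        rcases hW₁ hC with h' | h'
        · exact absurd h' h
        · exact h'
      exact τ.2 C (hsub ⟨hC, hCM⟩)
  · rintro x ⟨C, hC, rfl⟩
    by_cases h : C = A₁
    · simp only [if_pos h]; exact Set.mem_insert _ _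
    · simp only [if_neg h]
      have hCM : C ∈ M := by
        rcases hW₁ hC with h' | h'
        · exact absurd h' h
        · exact h'
      exact Set.mem_insert_of_mem _ ⟨C, hsub ⟨hC, hCM⟩, rfl⟩

lemma gen_combine [Nonempty T] (hcl : IsClosure cl) {M : Set (Set T)}
    (hM : FinCohSDS cl Tneg M) {A A₁ A₂ : Set T} (hU : A₁ ∪ A₂ ∈ M)
    (h₁ : A ∈ gen cl Tneg M A₁) (h₂ : A ∈ gen cl Tneg M A₂) : A ∈ M := by
  classical
  obtain ⟨W₁, hW₁sub, hW₁fin, -, f₁, hf₁, hr₁⟩ := h₁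
  obtain ⟨W₂, hW₂sub, hW₂fin, -, f₂, hf₂, hr₂⟩ := h₂
  set W : Set (Set T) := (W₁ ∩ M) ∪ (W₂ ∩ M) ∪ {A₁ ∪ A₂} with hWdef
  have hWsub : W ⊆ M := by
    rintro C ((⟨-, h⟩ | ⟨-, h⟩) | h)
    · exact h
    · exact h
    · rwa [Set.mem_singleton_iff.1 h]
  have hWfin : W.Finite :=
    (((hW₁fin.inter_of_left M).union (hW₂fin.inter_of_left M)).union
      (Set.finite_singleton _))
  have hUW : A₁ ∪ A₂ ∈ W := Or.inr rfl
  have hWne : W.Nonempty := ⟨A₁ ∪ A₂, hUW⟩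
  have hsub₁ : W₁ ∩ M ⊆ W := fun C hC => Or.inl (Or.inl hC)
  have hsub₂ : W₂ ∩ M ⊆ W := fun C hC => Or.inl (Or.inr hC)
  have hins : ∀ τ : Sel W, insert (τ.1 (A₁ ∪ A₂)) (τ.1 '' W) = τ.1 '' W := by
    intro τ
    exact Set.insert_eq_self.2 ⟨A₁ ∪ A₂, hUW, rfl⟩
  have hσ₁ : ∀ τ : Sel W, τ.1 (A₁ ∪ A₂) ∈ A₁ →
      ∃ σ : Sel W₁, σ.1 '' W₁ ⊆ τ.1 '' W := by
    intro τ hu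
    obtain ⟨σ, hσ⟩ := sel_aux hW₁sub hsub₁ τ hu
    exact ⟨σ, by rwa [hins τ] at hσ⟩
  have hσ₂ : ∀ τ : Sel W, τ.1 (A₁ ∪ A₂) ∈ A₂ →
      ∃ σ : Sel W₂, σ.1 '' W₂ ⊆ τ.1 '' W := by
    intro τ hu
    obtain ⟨σ, hσ⟩ := sel_aux hW₂sub hsub₂ τ hu
    exact ⟨σ, by rwa [hins τ] at hσ⟩
  choose s₁ hs₁ using hσ₁
  choose s₂ hs₂ using hσ₂
  have hmem : ∀ τ : Sel W, τ.1 (A₁ ∪ A₂) ∉ A₁ → τ.1 (A₁ ∪ A₂) ∈ A₂ := by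
    intro τ h
    rcases τ.2 _ hUW with h' | h'
    · exact absurd h' h
    · exact h'
  set F : Sel W → T := fun τ =>
    if hu : τ.1 (A₁ ∪ A₂) ∈ A₁ then f₁ (s₁ τ hu) else f₂ (s₂ τ (hmem τ hu))
    with hFdef
  have hFr : Set.range F ∈ M := by
    apply hM.2.2.2.2 W hWsub hWfin hWne F
    intro τ
    by_cases hu : τ.1 (A₁ ∪ A₂) ∈ A₁
    · simp only [hFdef, dif_pos hu]
      exact hcl.2.1 _ _ (hs₁ τ hu) (hf₁ _)
    · simp only [hFdef, dif_neg hu]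
      exact hcl.2.1 _ _ (hs₂ τ (hmem τ hu)) (hf₂ _)
  have hFd : Set.range F \ Tneg ∈ M := hM.2.2.1 _ hFr
  apply hM.2.1 _ hFd A
  rintro x ⟨⟨τ, rfl⟩, hxn⟩
  by_cases hu : τ.1 (A₁ ∪ A₂) ∈ A₁
  · have : F τ ∈ Set.range f₁ := by simp only [hFdef, dif_pos hu]; exact ⟨_, rfl⟩
    exact hr₁ ⟨this, hxn⟩
  · have : F τ ∈ Set.range f₂ := by simp only [hFdef, dif_neg hu]; exact ⟨_, rfl⟩
    exact hr₂ ⟨this, hxn⟩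

lemma finite_subset_chain {c : Set (Set (Set T))} (hc : IsChain (· ⊆ ·) c)
    (hne : c.Nonempty) {W : Set (Set T)} (hfin : W.Finite)
    (hsub : W ⊆ ⋃₀ c) : ∃ M ∈ c, W ⊆ M := by
  revert hsub
  refine Set.Finite.induction_on (motive := fun s _ => s ⊆ ⋃₀ c → ∃ M ∈ c, s ⊆ M) W hfin ?_ ?_
  · intro _
    obtain ⟨M, hM⟩ := hne
    exact ⟨M, hM, Set.empty_subset M⟩
  · intro a s ha hsfin ih hsub
    obtain ⟨M₁, hM₁, hsM₁⟩ := ih ((Set.subset_insert a s).trans hsub)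
    obtain ⟨M₂, hM₂, haM₂⟩ := hsub (Set.mem_insert a s)
    rcases hc.total hM₁ hM₂ with h | h
    · exact ⟨M₂, hM₂, Set.insert_subset haM₂ (hsM₁.trans h)⟩
    · exact ⟨M₁, hM₁, Set.insert_subset (h haM₂) hsM₁⟩

lemma chain_union_fincoh {c : Set (Set (Set T))} (hc : IsChain (· ⊆ ·) c)
    (hne : c.Nonempty) (h : ∀ M ∈ c, FinCohSDS cl Tneg M) :
    FinCohSDS cl Tneg (⋃₀ c) := by
  refine ⟨?_, ?_, ?_, ?_, ?_⟩
  · rintro ⟨M, hM, h0⟩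
    exact (h M hM).1 h0
  · rintro A₁ ⟨M, hM, hA₁⟩ A₂ hsub
    exact ⟨M, hM, (h M hM).2.1 A₁ hA₁ A₂ hsub⟩
  · rintro A ⟨M, hM, hA⟩
    exact ⟨M, hM, (h M hM).2.2.1 A hA⟩
  · intro s hs
    obtain ⟨M, hM⟩ := hne
    exact ⟨M, hM, (h M hM).2.2.2.1 s hs⟩
  · intro W hW hWfin hWne f hf
    obtain ⟨M, hM, hWM⟩ := finite_subset_chain hc hne hWfin hW
    exact ⟨M, hM, (h M hM).2.2.2.2 W hWM hWfin hWne f hf⟩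

end AuxPrimeFilter

/-- Prime filter representation: a finitely consistent SDS is finitely
coherent iff it is the intersection of the complete finitely coherent SDSes
including it. -/
theorem prime_filter_representation_finCohSDS (T : Type u) [Nonempty T]
    (cl : Set T → Set T) (Tneg : Set T)
    (hcl : IsClosure cl) (hsan : cl (∅ : Set T) ∩ Tneg = ∅)
    (K : Set (Set T)) (hcons : FinConsistent cl Tneg K) :
    FinCohSDS cl Tneg K ↔
      K = ⋂₀ {K' : Set (Set T) |
        FinCohSDS cl Tneg K' ∧ CompleteSDS K' ∧ K ⊆ K'} := by
  constructor
  · -- forward direction: Zorn + completeness of maximal elements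
    intro hK
    apply Set.Subset.antisymm
    · intro A hA
      exact fun K' hK' => hK'.2.2 hA
    · intro A hA
      by_contra hAK
      set S : Set (Set (Set T)) :=
        {M | FinCohSDS cl Tneg M ∧ K ⊆ M ∧ A ∉ M} with hSdef
      have hchains : ∀ c ⊆ S, IsChain (· ⊆ ·) c → c.Nonempty →
          ∃ ub ∈ S, ∀ s ∈ c, s ⊆ ub := by
        intro c hcS hc hcne
        refine ⟨⋃₀ c, ⟨chain_union_fincoh hc hcne fun M hM => (hcS hM).1, ?_, ?_⟩,
          fun s hs => Set.subset_sUnion_of_mem hs⟩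
        · obtain ⟨M, hM⟩ := hcne
          exact (hcS hM).2.1.trans (Set.subset_sUnion_of_mem hM)
        · rintro ⟨M, hM, hAM⟩
          exact (hcS hM).2.2 hAM
      obtain ⟨M, hKM, hMmax⟩ :=
        zorn_subset_nonempty S hchains K ⟨hK, Set.Subset.rfl, hAK⟩
      obtain ⟨hMcoh, hKM', hAM⟩ := hMmax.1
      have key : ∀ B : Set T, B ∉ M → A ∈ gen cl Tneg M B := by
        intro B hB
        by_contra hAg
        by_cases h0 : (∅ : Set T) ∈ gen cl Tneg M B
        · exact hAg (gen_mono_target h0 (Set.empty_subset A))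
        · have hMg : M ⊆ gen cl Tneg M B := fun C hC =>
            mem_gen hcl (Set.mem_insert_of_mem _ hC)
          have hgS : gen cl Tneg M B ∈ S :=
            ⟨gen_fincoh hcl hMcoh B h0, hKM'.trans hMg, hAg⟩
          have hle : gen cl Tneg M B ⊆ M := hMmax.2 hgS hMg
          exact hB (hle (mem_gen hcl (Set.mem_insert _ _)))
      have hcomp : CompleteSDS M := by
        intro A₁ A₂ hU
        by_contra hnot
        push_neg at hnot
        exact hAM (gen_combine hcl hMcoh hU (key A₁ hnot.1) (key A₂ hnot.2))
      exact hAM (hA M ⟨hMcoh, hcomp, hKM'⟩)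
  · -- backward direction: pointwise verification
    intro hKeq
    obtain ⟨K'', hK'', hKK''⟩ := hcons
    have hmem : ∀ A : Set T, A ∈ K ↔
        ∀ K' ∈ {K' : Set (Set T) |
          FinCohSDS cl Tneg K' ∧ CompleteSDS K' ∧ K ⊆ K'}, A ∈ K' :=
      fun A => (Set.ext_iff.1 hKeq A).trans Set.mem_sInter
    refine ⟨?_, ?_, ?_, ?_, ?_⟩
    · intro h0
      exact hK''.1 (hKK'' h0)
    · intro A₁ hA₁ A₂ hsub
      rw [hmem] at hA₁ ⊢
      exact fun K' hK' => hK'.1.2.1 A₁ (hA₁ K' hK') A₂ hsub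
    · intro A hA
      rw [hmem] at hA ⊢
      exact fun K' hK' => hK'.1.2.2.1 A (hA K' hK')
    · intro s hs
      rw [hmem]
      exact fun K' hK' => hK'.1.2.2.2.1 s hs
    · intro W hW hWfin hWne f hf
      rw [hmem]
      intro K' hK'
      exact hK'.1.2.2.2.2 W (hW.trans hK'.2.2) hWfin hWne f hf
end
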